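/- Let A and B be m×n complex matrices and E = B − A. Define β′₁ := (‖E‖_F² − ‖EB†B‖_F²)/‖A‖₂⁴ + (‖E‖_F² − ‖AA†E‖_F²)/‖B‖₂⁴ and β′₂ := (‖E‖_F² − ‖BB†E‖_F²)/‖A‖₂⁴ + (‖E‖_F² − ‖EA†A‖_F²)/‖B‖₂⁴. Then ‖B† − A†‖_F² ≥ max{β′₁ + ‖B†EA†‖_F², β′₂ + ‖A†EB†‖_F²}. -/

import Mathlib

open Matrix

/-- The square of the Frobenius norm of a complex matrix. -/
noncomputable def frobSq {α β : Type*} [Fintype α] [Fintype β] (M : Matrix α β ℂ) : ℝ :=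
  ∑ i, ∑ j, ‖M i j‖ ^ 2

/-- The spectral norm (ℓ²-operator norm) of a complex matrix. -/
noncomputable def spec {α β : Type*} [Fintype α] [Fintype β] [DecidableEq β]
    (M : Matrix α β ℂ) : ℝ :=
  ‖LinearMap.toContinuousLinearMap (Matrix.toEuclideanLin M)‖

/-- `X` is the Moore–Penrose inverse of `M` (the four Penrose equations). -/
def IsMoorePenrose {α β : Type*} [Fintype α] [Fintype β]
    (M : Matrix α β ℂ) (X : Matrix β α ℂ) : Prop :=
  M * X * M = M ∧ X * M * X = X ∧ (M * X)ᴴ = M * X ∧ (X * M)ᴴ = X * M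

/-
Wedin's splitting `B† - A† = B† (1 - A A†) - B† E A† - (1 - B† B) A†` is a sum of three
matrices that are pairwise orthogonal for the Frobenius inner product: the first two have their
columns in the range of `B†` while the last has them in its orthogonal complement, and the
first two are separated on the right by the complementary projections `1 - A A†` and `A A†`.
Hence `‖B† - A†‖_F²` is the sum of the three squared norms. The defect `‖E‖_F² - ‖A A† E‖_F²`
equals `‖(1 - A A†) B‖_F²`, and `(1 - A A†) B = (B† (1 - A A†))ᴴ Bᴴ B` bounds it by
`‖B‖₂⁴ ‖B† (1 - A A†)‖_F²`; symmetrically `‖E‖_F² - ‖E B† B‖_F² = ‖A (1 - B† B)‖_F²` is at most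
`‖A‖₂⁴ ‖(1 - B† B) A†‖_F²`. Exchanging the roles of `A` and `B` gives the second bound.
-/

section Frobenius

variable {l m n : Type*} [Fintype l] [Fintype m] [Fintype n]

lemma frobSq_nonneg (M : Matrix m n ℂ) : 0 ≤ frobSq M :=
  Finset.sum_nonneg fun _ _ => Finset.sum_nonneg fun _ _ => sq_nonneg _

lemma frobSq_eq_re_trace (M : Matrix m n ℂ) : frobSq M = (Mᴴ * M).trace.re := by
  simp only [frobSq, trace, diag_apply, mul_apply, conjTranspose_apply, Complex.re_sum]
  rw [Finset.sum_comm]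
  refine Finset.sum_congr rfl fun j _ => Finset.sum_congr rfl fun i _ => ?_
  rw [Complex.star_def, mul_comm, Complex.mul_conj, Complex.ofReal_re, Complex.normSq_eq_norm_sq]

@[simp]
lemma frobSq_neg (M : Matrix m n ℂ) : frobSq (-M) = frobSq M := by
  simp [frobSq]

@[simp]
lemma frobSq_conjTranspose (M : Matrix m n ℂ) : frobSq Mᴴ = frobSq M := by
  rw [frobSq, Finset.sum_comm]
  simp [frobSq]

lemma frobSq_add_of_conjTranspose_mul_eq_zero {X Y : Matrix m n ℂ} (h : Xᴴ * Y = 0) :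
    frobSq (X + Y) = frobSq X + frobSq Y := by
  have h' : Yᴴ * X = 0 := by rw [← conjTranspose_conjTranspose X, ← conjTranspose_mul, h,
    conjTranspose_zero]
  simp only [frobSq_eq_re_trace, conjTranspose_add, Matrix.add_mul, Matrix.mul_add, h, h',
    add_zero, zero_add, trace_add, Complex.add_re]

lemma frobSq_add_of_mul_conjTranspose_eq_zero {X Y : Matrix m n ℂ} (h : X * Yᴴ = 0) :
    frobSq (X + Y) = frobSq X + frobSq Y := by
  rw [← frobSq_conjTranspose, conjTranspose_add,
    frobSq_add_of_conjTranspose_mul_eq_zero (by rwa [conjTranspose_conjTranspose]),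
    frobSq_conjTranspose, frobSq_conjTranspose]

lemma frobSq_sub_of_conjTranspose_mul_eq_zero {X Y : Matrix m n ℂ} (h : Xᴴ * Y = 0) :
    frobSq (X - Y) = frobSq X + frobSq Y := by
  rw [sub_eq_add_neg, frobSq_add_of_conjTranspose_mul_eq_zero (by rw [Matrix.mul_neg, h, neg_zero]),
    frobSq_neg]

lemma frobSq_sub_of_mul_conjTranspose_eq_zero {X Y : Matrix m n ℂ} (h : X * Yᴴ = 0) :
    frobSq (X - Y) = frobSq X + frobSq Y := by
  rw [sub_eq_add_neg, frobSq_add_of_mul_conjTranspose_eq_zero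
    (by rw [conjTranspose_neg, Matrix.mul_neg, h, neg_zero]), frobSq_neg]

lemma frobSq_eq_mul_add_one_sub_mul [DecidableEq m] {P : Matrix m m ℂ} (hP : IsStarProjection P)
    (X : Matrix m n ℂ) : frobSq X = frobSq (P * X) + frobSq ((1 - P) * X) := by
  have hPH : Pᴴ = P := hP.isSelfAdjoint
  conv_lhs => rw [← Matrix.one_mul X, ← add_sub_cancel P 1, Matrix.add_mul]
  refine frobSq_add_of_conjTranspose_mul_eq_zero ?_
  rw [conjTranspose_mul, hPH, Matrix.mul_assoc, ← Matrix.mul_assoc P, hP.mul_one_sub_self,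
    Matrix.zero_mul, Matrix.mul_zero]

lemma frobSq_eq_mul_add_mul_one_sub [DecidableEq n] {P : Matrix n n ℂ} (hP : IsStarProjection P)
    (X : Matrix m n ℂ) : frobSq X = frobSq (X * P) + frobSq (X * (1 - P)) := by
  have hPH : Pᴴ = P := hP.isSelfAdjoint
  rw [← frobSq_conjTranspose X, frobSq_eq_mul_add_one_sub_mul hP, ← frobSq_conjTranspose (X * P),
    ← frobSq_conjTranspose (X * (1 - P)), conjTranspose_mul, conjTranspose_mul,
    conjTranspose_sub, conjTranspose_one, hPH]

end Frobenius

section L2Operator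

open scoped Matrix.Norms.L2Operator

variable {l m n : Type*} [Fintype l] [Fintype m] [Fintype n]

lemma spec_eq_l2_opNorm [DecidableEq n] (M : Matrix m n ℂ) : spec M = ‖M‖ := rfl

lemma frobSq_mul_le [DecidableEq m] (M : Matrix l m ℂ) (X : Matrix m n ℂ) :
    frobSq (M * X) ≤ spec M ^ 2 * frobSq X := by
  have hcol : ∀ j, ∑ i, ‖(M * X) i j‖ ^ 2 ≤ spec M ^ 2 * ∑ k, ‖X k j‖ ^ 2 := by
    intro j
    have h := pow_le_pow_left₀ (norm_nonneg _)
      (l2_opNorm_mulVec M ((EuclideanSpace.equiv m ℂ).symm fun k => X k j)) 2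
    rw [EuclideanSpace.norm_sq_eq, mul_pow, EuclideanSpace.norm_sq_eq] at h
    -- `(M * X) i j` is definitionally `(M *ᵥ fun k => X k j) i`
    convert h using 3 <;> rfl
  calc frobSq (M * X) = ∑ j, ∑ i, ‖(M * X) i j‖ ^ 2 := Finset.sum_comm
    _ ≤ ∑ j, spec M ^ 2 * ∑ k, ‖X k j‖ ^ 2 := Finset.sum_le_sum fun j _ => hcol j
    _ = spec M ^ 2 * frobSq X := by rw [← Finset.mul_sum, frobSq, Finset.sum_comm]

lemma spec_conjTranspose_mul_self [DecidableEq n] (M : Matrix m n ℂ) :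
    spec (Mᴴ * M) = spec M ^ 2 := by
  rw [spec_eq_l2_opNorm, spec_eq_l2_opNorm, l2_opNorm_conjTranspose_mul_self, sq]

lemma spec_mul_conjTranspose_self [DecidableEq m] [DecidableEq n] (M : Matrix m n ℂ) :
    spec (M * Mᴴ) = spec M ^ 2 := by
  rw [spec_eq_l2_opNorm, spec_eq_l2_opNorm, sq, ← l2_opNorm_conjTranspose M,
    ← l2_opNorm_conjTranspose_mul_self Mᴴ, conjTranspose_conjTranspose]

end L2Operator

namespace IsMoorePenrose

variable {m n : Type*} [Fintype m] [Fintype n] {M : Matrix m n ℂ} {X : Matrix n m ℂ}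

lemma symm (h : IsMoorePenrose M X) : IsMoorePenrose X M :=
  ⟨h.2.1, h.1, h.2.2.2, h.2.2.1⟩

lemma isStarProjection_self_mul [DecidableEq m] (h : IsMoorePenrose M X) :
    IsStarProjection (M * X) where
  isIdempotentElem := by rw [IsIdempotentElem, ← Matrix.mul_assoc, h.1]
  isSelfAdjoint := h.2.2.1

lemma isStarProjection_mul_self [DecidableEq n] (h : IsMoorePenrose M X) :
    IsStarProjection (X * M) :=
  h.symm.isStarProjection_self_mul

lemma one_sub_mul [DecidableEq m] (h : IsMoorePenrose M X) : (1 - M * X) * M = 0 := by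
  rw [Matrix.sub_mul, Matrix.one_mul, h.1, sub_self]

lemma mul_one_sub [DecidableEq n] (h : IsMoorePenrose M X) : M * (1 - X * M) = 0 := by
  rw [Matrix.mul_sub, Matrix.mul_one, ← Matrix.mul_assoc, h.1, sub_self]

lemma conjTranspose_mul_self_mul (h : IsMoorePenrose M X) : Mᴴ * (M * X) = Mᴴ := by
  conv_lhs => rw [← h.2.2.1, ← conjTranspose_mul, h.1]

lemma mul_self_mul_conjTranspose (h : IsMoorePenrose M X) : X * M * Mᴴ = Mᴴ := by
  conv_lhs => rw [← h.2.2.2, ← conjTranspose_mul, ← Matrix.mul_assoc, h.1]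

lemma frobSq_left_mul_le [DecidableEq n] (h : IsMoorePenrose M X) (P : Matrix m m ℂ) :
    frobSq (P * M) ≤ spec M ^ 4 * frobSq (X * Pᴴ) := by
  have hPM : (P * M)ᴴ = Mᴴ * M * (X * Pᴴ) := by
    rw [conjTranspose_mul, ← Matrix.mul_assoc, Matrix.mul_assoc Mᴴ M X,
      h.conjTranspose_mul_self_mul]
  calc frobSq (P * M) = frobSq (Mᴴ * M * (X * Pᴴ)) := by rw [← hPM, frobSq_conjTranspose]
    _ ≤ spec (Mᴴ * M) ^ 2 * frobSq (X * Pᴴ) := frobSq_mul_le _ _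
    _ = spec M ^ 4 * frobSq (X * Pᴴ) := by rw [spec_conjTranspose_mul_self]; ring

lemma frobSq_right_mul_le [DecidableEq m] [DecidableEq n] (h : IsMoorePenrose M X)
    (P : Matrix n n ℂ) : frobSq (M * P) ≤ spec M ^ 4 * frobSq (Pᴴ * X) := by
  have hMP : M * P = M * Mᴴ * (Pᴴ * X)ᴴ := by
    rw [conjTranspose_mul, conjTranspose_conjTranspose, ← Matrix.mul_assoc, Matrix.mul_assoc M,
      ← conjTranspose_mul, h.2.2.2, ← Matrix.mul_assoc, h.1]
  calc frobSq (M * P) = frobSq (M * Mᴴ * (Pᴴ * X)ᴴ) := by rw [← hMP]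
    _ ≤ spec (M * Mᴴ) ^ 2 * frobSq (Pᴴ * X)ᴴ := frobSq_mul_le _ _
    _ = spec M ^ 4 * frobSq (Pᴴ * X) := by
      rw [spec_mul_conjTranspose_self, frobSq_conjTranspose]; ring

end IsMoorePenrose

section PerturbationBound

variable {m n : Type*} [Fintype m] [Fintype n] [DecidableEq m] [DecidableEq n]
  {A B : Matrix m n ℂ} {Adag Bdag : Matrix n m ℂ}

theorem frobSq_pinv_sub_pinv (hA : IsMoorePenrose A Adag) (hB : IsMoorePenrose B Bdag) :
    frobSq (Bdag - Adag) = frobSq (Bdag * (1 - A * Adag)) + frobSq (Bdag * (B - A) * Adag)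
      + frobSq ((1 - Bdag * B) * Adag) := by
  have hsplit : Bdag - Adag =
      Bdag * ((1 - A * Adag) - (B - A) * Adag) - (1 - Bdag * B) * Adag := by
    simp only [Matrix.mul_sub, Matrix.sub_mul, Matrix.mul_one, Matrix.one_mul, Matrix.mul_assoc]
    abel
  have hcols : (Bdag * ((1 - A * Adag) - (B - A) * Adag))ᴴ * ((1 - Bdag * B) * Adag) = 0 := by
    rw [conjTranspose_mul, Matrix.mul_assoc, ← Matrix.mul_assoc Bdagᴴ, Matrix.mul_sub,
      Matrix.mul_one, hB.symm.conjTranspose_mul_self_mul, sub_self, Matrix.zero_mul,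
      Matrix.mul_zero]
  have hrows : Bdag * (1 - A * Adag) * (Bdag * (B - A) * Adag)ᴴ = 0 := by
    rw [conjTranspose_mul, Matrix.mul_assoc, ← Matrix.mul_assoc (1 - A * Adag), Matrix.sub_mul,
      Matrix.one_mul, hA.symm.mul_self_mul_conjTranspose, sub_self, Matrix.zero_mul,
      Matrix.mul_zero]
  rw [hsplit, frobSq_sub_of_conjTranspose_mul_eq_zero hcols, Matrix.mul_sub, ← Matrix.mul_assoc,
    frobSq_sub_of_mul_conjTranspose_eq_zero hrows]

theorem frobSq_sub_sub_frobSq_projection_mul_le (hA : IsMoorePenrose A Adag)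
    (hB : IsMoorePenrose B Bdag) :
    frobSq (B - A) - frobSq (A * Adag * (B - A)) ≤ spec B ^ 4 * frobSq (Bdag * (1 - A * Adag)) := by
  have hP := hA.isStarProjection_self_mul
  calc frobSq (B - A) - frobSq (A * Adag * (B - A)) = frobSq ((1 - A * Adag) * (B - A)) := by
        rw [frobSq_eq_mul_add_one_sub_mul hP (B - A)]; ring
    _ = frobSq ((1 - A * Adag) * B) := by rw [Matrix.mul_sub, hA.one_sub_mul, sub_zero]
    _ ≤ spec B ^ 4 * frobSq (Bdag * (1 - A * Adag)ᴴ) := hB.frobSq_left_mul_le _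
    _ = spec B ^ 4 * frobSq (Bdag * (1 - A * Adag)) := by
        rw [show (1 - A * Adag)ᴴ = 1 - A * Adag from hP.one_sub.isSelfAdjoint]

theorem frobSq_sub_sub_frobSq_mul_projection_le (hA : IsMoorePenrose A Adag)
    (hB : IsMoorePenrose B Bdag) :
    frobSq (B - A) - frobSq ((B - A) * Bdag * B) ≤ spec A ^ 4 * frobSq ((1 - Bdag * B) * Adag) := by
  have hP := hB.isStarProjection_mul_self
  calc frobSq (B - A) - frobSq ((B - A) * Bdag * B) = frobSq ((B - A) * (1 - Bdag * B)) := by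
        rw [frobSq_eq_mul_add_mul_one_sub hP (B - A), Matrix.mul_assoc]; ring
    _ = frobSq (A * (1 - Bdag * B)) := by
        rw [Matrix.sub_mul, hB.mul_one_sub, zero_sub, frobSq_neg]
    _ ≤ spec A ^ 4 * frobSq ((1 - Bdag * B)ᴴ * Adag) := hA.frobSq_right_mul_le _
    _ = spec A ^ 4 * frobSq ((1 - Bdag * B) * Adag) := by
        rw [show (1 - Bdag * B)ᴴ = 1 - Bdag * B from hP.one_sub.isSelfAdjoint]

theorem le_frobSq_pinv_sub_pinv (hA : IsMoorePenrose A Adag) (hB : IsMoorePenrose B Bdag) :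
    (frobSq (B - A) - frobSq ((B - A) * Bdag * B)) / spec A ^ 4
      + (frobSq (B - A) - frobSq (A * Adag * (B - A))) / spec B ^ 4
      + frobSq (Bdag * (B - A) * Adag) ≤ frobSq (Bdag - Adag) := by
  have hdivA := div_le_of_le_mul₀ (by positivity) (frobSq_nonneg _)
    ((frobSq_sub_sub_frobSq_mul_projection_le hA hB).trans_eq (mul_comm _ _))
  have hdivB := div_le_of_le_mul₀ (by positivity) (frobSq_nonneg _)
    ((frobSq_sub_sub_frobSq_projection_mul_le hA hB).trans_eq (mul_comm _ _))
  rw [frobSq_pinv_sub_pinv hA hB]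
  linarith

end PerturbationBound

theorem stmt8_general {m n : ℕ}
    (A B : Matrix (Fin m) (Fin n) ℂ)
    (Adag Bdag : Matrix (Fin n) (Fin m) ℂ)
    (hA : IsMoorePenrose A Adag) (hB : IsMoorePenrose B Bdag)
    (E : Matrix (Fin m) (Fin n) ℂ) (hE : E = B - A)
    :
    frobSq (Bdag - Adag) ≥
      max
        ((frobSq E - frobSq (E * Bdag * B)) / spec A ^ 4
          + (frobSq E - frobSq (A * Adag * E)) / spec B ^ 4
          + frobSq (Bdag * E * Adag))
        ((frobSq E - frobSq (B * Bdag * E)) / spec A ^ 4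
          + (frobSq E - frobSq (E * Adag * A)) / spec B ^ 4
          + frobSq (Adag * E * Bdag)) := by
  subst hE
  refine max_le (le_frobSq_pinv_sub_pinv hA hB) ?_
  have h := le_frobSq_pinv_sub_pinv hB hA
  rw [← neg_sub B A, ← neg_sub Bdag Adag] at h
  simp only [Matrix.neg_mul, Matrix.mul_neg, frobSq_neg] at h
  linarith

theorem stmt8 {m n : ℕ}
    (A B : Matrix (Fin m) (Fin n) ℂ)
    (Adag Bdag : Matrix (Fin n) (Fin m) ℂ)
    (hA : IsMoorePenrose A Adag) (hB : IsMoorePenrose B Bdag)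
    (E : Matrix (Fin m) (Fin n) ℂ) (hE : E = B - A)
    (hA0 : A ≠ 0) (hB0 : B ≠ 0)
    :
    frobSq (Bdag - Adag) ≥
      max
        ((frobSq E - frobSq (E * Bdag * B)) / spec A ^ 4
          + (frobSq E - frobSq (A * Adag * E)) / spec B ^ 4
          + frobSq (Bdag * E * Adag))
        ((frobSq E - frobSq (B * Bdag * E)) / spec A ^ 4
          + (frobSq E - frobSq (E * Adag * A)) / spec B ^ 4
          + frobSq (Adag * E * Bdag)) :=
  stmt8_general A B Adag Bdag hA hB E hE
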